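/- Let U ⊆ ℝ² be open and let η, ζ : U → ℝ be harmonic with η_x² + η_y² > 0 everywhere on U. Then the two functions (η_x ζ_x + η_y ζ_y)/(η_x² + η_y²) and (η_x ζ_y − η_y ζ_x)/(η_x² + η_y²) are harmonic on U. (They are the real and, up to sign, imaginary parts of the holomorphic quotient (ζ_y + iζ_x)/(η_y + iη_x); applied with ζ replaced by ϑ this shows the conformal velocity components and electric field components are harmonic.) -/

import Mathlib

/-- Partial derivative in the first (horizontal) variable. -/
noncomputable def pdx (f : ℝ × ℝ → ℝ) (p : ℝ × ℝ) : ℝ := fderiv ℝ f p (1, 0)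

/-- Partial derivative in the second (vertical) variable. -/
noncomputable def pdy (f : ℝ × ℝ → ℝ) (p : ℝ × ℝ) : ℝ := fderiv ℝ f p (0, 1)

/-- A function is harmonic on an open set if it is twice continuously differentiable
there and its Laplacian `u_xx + u_yy` vanishes. -/
def IsHarmonicOn (f : ℝ × ℝ → ℝ) (U : Set (ℝ × ℝ)) : Prop :=
  ContDiffOn ℝ 2 f U ∧ ∀ p ∈ U, pdx (pdx f) p + pdy (pdy f) p = 0

/-! For harmonic `η`, the function `η_x - i η_y` of `z = x + i y` is holomorphic: its
Cauchy–Riemann equations are the symmetry of the second derivative and `Δη = 0`. Hence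
`H = (ζ_x - i ζ_y) / (η_x - i η_y)` is holomorphic wherever `∇η ≠ 0`, and the two functions are
`Re H` and `Re (i H)`, real parts of holomorphic functions. Both facts are available for
functions on `ℂ` (`HarmonicAt.analyticAt_complex_partial`, `AnalyticAt.harmonicAt_re`), to which
`pdx`, `pdy` and `IsHarmonicOn` are transported along `equivRealProdCLM : ℂ ≃L[ℝ] ℝ × ℝ`. -/

open Complex InnerProductSpace Laplacian

section

variable {f : ℝ × ℝ → ℝ} {U : Set (ℝ × ℝ)}

lemma pdx_pdx_eq_fderiv_fderiv {p : ℝ × ℝ} (hf : DifferentiableAt ℝ (fderiv ℝ f) p) :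
    pdx (pdx f) p = fderiv ℝ (fderiv ℝ f) p (1, 0) (1, 0) := by
  unfold pdx
  rw [fderiv_clm_apply hf (differentiableAt_const _)]
  simp

lemma pdy_pdy_eq_fderiv_fderiv {p : ℝ × ℝ} (hf : DifferentiableAt ℝ (fderiv ℝ f) p) :
    pdy (pdy f) p = fderiv ℝ (fderiv ℝ f) p (0, 1) (0, 1) := by
  unfold pdy
  rw [fderiv_clm_apply hf (differentiableAt_const _)]
  simp

lemma fderiv_comp_equivRealProdCLM_one (z : ℂ) :
    fderiv ℝ (f ∘ equivRealProdCLM) z 1 = pdx f (equivRealProdCLM z) := by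
  simp [ContinuousLinearEquiv.comp_right_fderiv, pdx]

lemma fderiv_comp_equivRealProdCLM_I (z : ℂ) :
    fderiv ℝ (f ∘ equivRealProdCLM) z I = pdy f (equivRealProdCLM z) := by
  simp [ContinuousLinearEquiv.comp_right_fderiv, pdy]

lemma laplacian_comp_equivRealProdCLM {z : ℂ} (hf : ContDiffAt ℝ 2 f (equivRealProdCLM z)) :
    Δ (f ∘ equivRealProdCLM) z =
      pdx (pdx f) (equivRealProdCLM z) + pdy (pdy f) (equivRealProdCLM z) := by
  have hf' : DifferentiableAt ℝ (fderiv ℝ f) (equivRealProdCLM z) :=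
    (hf.fderiv_right (m := 1) le_rfl).differentiableAt one_ne_zero
  have h := equivRealProdCLM.iteratedFDerivWithin_comp_right f uniqueDiffOn_univ
    (Set.mem_univ (equivRealProdCLM z)) 2
  simp only [Set.preimage_univ, iteratedFDerivWithin_univ] at h
  rw [pdx_pdx_eq_fderiv_fderiv hf', pdy_pdy_eq_fderiv_fderiv hf']
  simp [laplacian_eq_iteratedFDeriv_complexPlane, h, iteratedFDeriv_two_apply]

lemma isHarmonicOn_iff_harmonicOnNhd_comp_equivRealProdCLM (hU : IsOpen U) :
    IsHarmonicOn f U ↔ HarmonicOnNhd (f ∘ equivRealProdCLM) (equivRealProdCLM ⁻¹' U) := by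
  have hC : ContDiffOn ℝ 2 f U → ∀ p ∈ U, ContDiffAt ℝ 2 f p :=
    fun hf p hp => hf.contDiffAt (hU.mem_nhds hp)
  constructor
  · rintro ⟨hf, hΔ⟩ z hz
    refine ⟨(hC hf _ hz).comp z equivRealProdCLM.contDiff.contDiffAt, ?_⟩
    filter_upwards [(hU.preimage equivRealProdCLM.continuous).mem_nhds hz] with w hw
    rw [laplacian_comp_equivRealProdCLM (hC hf _ hw)]
    exact hΔ _ hw
  · intro h
    have hf : ContDiffOn ℝ 2 f U := equivRealProdCLM.contDiffOn_comp_iff.1 h.contDiffOn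
    refine ⟨hf, fun p hp => ?_⟩
    have hz : equivRealProdCLM.symm p ∈ equivRealProdCLM ⁻¹' U := by simpa using hp
    have hΔ := laplacian_comp_equivRealProdCLM (z := equivRealProdCLM.symm p)
      (by simpa only [ContinuousLinearEquiv.apply_symm_apply] using hC hf p hp)
    rw [ContinuousLinearEquiv.apply_symm_apply] at hΔ
    exact hΔ ▸ (h _ hz).2.eq_of_nhds

lemma IsHarmonicOn.analyticOnNhd_complexGradient (hU : IsOpen U) (hf : IsHarmonicOn f U) :
    AnalyticOnNhd ℂ (fun z => (pdx f (equivRealProdCLM z) : ℂ) - I * pdy f (equivRealProdCLM z))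
      (equivRealProdCLM ⁻¹' U) := fun z hz => by
  simpa only [fderiv_comp_equivRealProdCLM_one, fderiv_comp_equivRealProdCLM_I] using
    HarmonicAt.analyticAt_complex_partial
      ((isHarmonicOn_iff_harmonicOnNhd_comp_equivRealProdCLM hU).1 hf z hz)

lemma isHarmonicOn_of_eq_re (hU : IsOpen U) {F : ℂ → ℂ}
    (hF : AnalyticOnNhd ℂ F (equivRealProdCLM ⁻¹' U))
    (hfF : ∀ p ∈ U, f p = (F (equivRealProdCLM.symm p)).re) : IsHarmonicOn f U := by
  refine (isHarmonicOn_iff_harmonicOnNhd_comp_equivRealProdCLM hU).2 fun z hz => ?_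
  refine (harmonicAt_congr_nhds ?_).2 (hF z hz).harmonicAt_re
  filter_upwards [(hU.preimage equivRealProdCLM.continuous).mem_nhds hz] with w hw
  simpa only [Function.comp_apply, ContinuousLinearEquiv.symm_apply_apply] using hfF _ hw

end

lemma Complex.normSq_sub_I_mul (a b : ℝ) : normSq (a - I * b) = a ^ 2 + b ^ 2 := by
  simp only [normSq_apply, sub_re, sub_im, mul_re, mul_im, ofReal_re, ofReal_im, I_re, I_im]
  ring

lemma Complex.re_sub_I_mul_div_sub_I_mul (a b c d : ℝ) :
    ((c - I * d) / (a - I * b)).re = (a * c + b * d) / (a ^ 2 + b ^ 2) := by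
  simp only [div_re, normSq_apply, sub_re, sub_im, mul_re, mul_im, ofReal_re, ofReal_im, I_re, I_im]
  ring

lemma Complex.re_I_mul_sub_I_mul_div_sub_I_mul (a b c d : ℝ) :
    (I * ((c - I * d) / (a - I * b))).re = (a * d - b * c) / (a ^ 2 + b ^ 2) := by
  simp only [mul_re, I_re, I_im, div_re, div_im, normSq_apply, sub_re, sub_im, mul_im,
    ofReal_re, ofReal_im]
  ring

/-- Let `U ⊆ ℝ²` be open and `η, ζ : U → ℝ` harmonic with `η_x² + η_y² > 0` on `U`.
Then `(η_x ζ_x + η_y ζ_y)/(η_x² + η_y²)` and `(η_x ζ_y − η_y ζ_x)/(η_x² + η_y²)` are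
harmonic on `U`. -/
theorem stmt_10 (U : Set (ℝ × ℝ)) (hU : IsOpen U) (η ζ : ℝ × ℝ → ℝ)
    (hη : IsHarmonicOn η U) (hζ : IsHarmonicOn ζ U)
    (hgrad : ∀ p ∈ U, 0 < (pdx η p) ^ 2 + (pdy η p) ^ 2) :
    IsHarmonicOn
      (fun p => (pdx η p * pdx ζ p + pdy η p * pdy ζ p) / ((pdx η p) ^ 2 + (pdy η p) ^ 2)) U ∧
    IsHarmonicOn
      (fun p => (pdx η p * pdy ζ p - pdy η p * pdx ζ p) / ((pdx η p) ^ 2 + (pdy η p) ^ 2)) U := by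
  have hne : ∀ z ∈ equivRealProdCLM ⁻¹' U,
      (pdx η (equivRealProdCLM z) : ℂ) - I * pdy η (equivRealProdCLM z) ≠ 0 := fun z hz =>
    normSq_pos.1 (normSq_sub_I_mul _ _ ▸ hgrad _ hz)
  have hH := (hζ.analyticOnNhd_complexGradient hU).div (hη.analyticOnNhd_complexGradient hU) hne
  refine ⟨isHarmonicOn_of_eq_re hU hH fun p _ => ?_,
    isHarmonicOn_of_eq_re hU ((analyticOnNhd_const (v := I)).mul hH) fun p _ => ?_⟩
  · rw [ContinuousLinearEquiv.apply_symm_apply, re_sub_I_mul_div_sub_I_mul]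
  · rw [ContinuousLinearEquiv.apply_symm_apply, re_I_mul_sub_I_mul_div_sub_I_mul]
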